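/- arXiv:1708.04268 — 6 statements merged into one kernel-verified Lean document; each statement's English description precedes it below -/
import Mathlib

section
/- Let (B, n) be a discrete valuation ring with uniformizer s, and let D ⊆ B be a subring such that n^i ⊆ D for some positive integer i, and such that the composite map D → B → B/n is surjective. Then the subring D[s] generated by D and s equals B. -/
/-!
Write `C` for the subring generated by `D` and `s`. Since `B = D + (s)`, induction gives
`B = C + (s ^ k)` for every `k`: if `b = c + s ^ k x` and `x = d + s y` with `d ∈ D`, then
`b = (c + s ^ k d) + s ^ (k + 1) y`. Taking `k = i`, the remainder lies in `n ^ i ⊆ D ⊆ C`.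
-/

theorem exists_mem_closure_union_singleton_sub_mem_span_pow {B : Type*} [CommRing B] {D : Subring B}
    {s : B} (hsurj : ∀ b : B, ∃ d ∈ D, b - d ∈ Ideal.span {s}) (k : ℕ) (b : B) :
    ∃ c ∈ Subring.closure ((D : Set B) ∪ {s}), b - c ∈ Ideal.span {s} ^ k := by
  set C := Subring.closure ((D : Set B) ∪ {s})
  induction k with
  | zero => exact ⟨0, C.zero_mem, by simp⟩
  | succ k ih =>
    obtain ⟨c, hc, hbc⟩ := ih
    rw [Ideal.span_singleton_pow, Ideal.mem_span_singleton'] at hbc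
    obtain ⟨x, hx⟩ := hbc
    obtain ⟨d, hd, hxd⟩ := hsurj x
    obtain ⟨y, hy⟩ := Ideal.mem_span_singleton'.mp hxd
    have hsC : s ∈ C := Subring.subset_closure (Or.inr rfl)
    have hdC : d ∈ C := Subring.subset_closure (Or.inl hd)
    refine ⟨c + s ^ k * d, C.add_mem hc (C.mul_mem (C.pow_mem hsC k) hdC), ?_⟩
    rw [Ideal.span_singleton_pow, Ideal.mem_span_singleton']
    exact ⟨y, by linear_combination hx + s ^ k * hy⟩

theorem subring_adjoin_uniformizer_eq_top_general
    (B : Type*) [CommRing B] [IsDomain B] [IsDiscreteValuationRing B]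
    (s : B) (hs : IsLocalRing.maximalIdeal B = Ideal.span {s})
    (D : Subring B) (i : ℕ)
    (hni : ∀ x ∈ (IsLocalRing.maximalIdeal B) ^ i, x ∈ D)
    (hsurj : ∀ b : B, ∃ d ∈ D, b - d ∈ IsLocalRing.maximalIdeal B) :
    Subring.closure ((D : Set B) ∪ {s}) = ⊤ := by
  rw [hs] at hni hsurj
  refine eq_top_iff.mpr fun b _ => ?_
  obtain ⟨c, hc, hbc⟩ := exists_mem_closure_union_singleton_sub_mem_span_pow hsurj i b
  have hbcD : b - c ∈ Subring.closure ((D : Set B) ∪ {s}) :=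
    Subring.subset_closure (Or.inl (hni _ hbc))
  simpa using Subring.add_mem _ hc hbcD

/-- Let `(B, n)` be a DVR with uniformizer `s`, and `D ⊆ B` a subring
such that `n ^ i ⊆ D` for some `i > 0` and such that the composite `D → B → B/n` is
surjective (every element of `B` is congruent mod `n` to an element of `D`).
Then the subring generated by `D` and `s` is all of `B`. -/
theorem subring_adjoin_uniformizer_eq_top
    (B : Type*) [CommRing B] [IsDomain B] [IsDiscreteValuationRing B]
    (s : B) (hs : IsLocalRing.maximalIdeal B = Ideal.span {s})
    (D : Subring B) (i : ℕ) (hi : 0 < i)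
    (hni : ∀ x ∈ (IsLocalRing.maximalIdeal B) ^ i, x ∈ D)
    (hsurj : ∀ b : B, ∃ d ∈ D, b - d ∈ IsLocalRing.maximalIdeal B) :
    Subring.closure ((D : Set B) ∪ {s}) = ⊤ :=
  subring_adjoin_uniformizer_eq_top_general B s hs D i hni hsurj
end

section
/- Let R be a commutative ring of characteristic p > 0 and d : R → R a derivation. Then the p-fold composite d^p (composition of d with itself p times) is again a derivation of R. -/
/-!
By the general Leibniz rule, `D^[n] (a * b) = ∑_{i + j = n} (n choose i) D^[i] a * D^[j] b`.
For `n = p` prime every binomial coefficient `(p choose i)` with `0 < i < p` is divisible by `p`,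
so in characteristic `p` only the two extreme terms `a * D^[p] b` and `D^[p] a * b` survive.
-/

open Finset

namespace Derivation

variable {R A : Type*} [CommSemiring R] [CommSemiring A] [Algebra R A]

theorem iterate_apply_mul (D : Derivation R A A) (n : ℕ) (a b : A) :
    D^[n] (a * b) = ∑ ij ∈ antidiagonal n, n.choose ij.1 • (D^[ij.1] a * D^[ij.2] b) := by
  induction n with
  | zero => simp
  | succ n ih =>
    rw [sum_antidiagonal_choose_succ_nsmul (M := A) (fun i j => D^[i] a * D^[j] b) n]
    simp only [Function.iterate_succ_apply', ih, map_sum, map_nsmul, leibniz, smul_eq_mul,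
      nsmul_add, sum_add_distrib]
    congr 1
    refine sum_congr rfl fun ⟨i, j⟩ hij => ?_
    rw [n.choose_symm_of_eq_add (HasAntidiagonal.mem_antidiagonal.1 hij).symm, mul_comm]

theorem iterate_prime_apply_mul (D : Derivation R A A) {p : ℕ} (hp : p.Prime) [CharP A p]
    (a b : A) : D^[p] (a * b) = a * D^[p] b + b * D^[p] a := by
  have hmiddle : ∀ ij ∈ antidiagonal p, ij ≠ (0, p) ∧ ij ≠ (p, 0) →
      p.choose ij.1 • (D^[ij.1] a * D^[ij.2] b) = 0 := by
    rintro ⟨i, j⟩ hij hextreme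
    rw [HasAntidiagonal.mem_antidiagonal] at hij
    simp only [ne_eq, Prod.mk.injEq] at hextreme
    rw [nsmul_eq_mul, (CharP.cast_eq_zero_iff A p _).2 (hp.dvd_choose_self (by omega) (by omega)),
      zero_mul]
  rw [iterate_apply_mul, sum_eq_add_of_mem (0, p) (p, 0) (by simp) (by simp)
    (by simp [hp.ne_zero]) hmiddle]
  simp [mul_comm]

end Derivation

/-- Let `R` be a commutative ring of characteristic `p > 0` and
`d : R → R` a derivation.  Then the `p`-fold composite `d^[p]` again satisfies the
Leibniz rule, i.e. it is again a derivation of `R`. -/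
theorem iterate_p_derivation_is_derivation
    (R : Type*) [CommRing R] (p : ℕ) (hp : p.Prime) [CharP R p]
    (d : Derivation ℤ R R) :
    ∀ a b : R, (⇑d)^[p] (a * b) = a * (⇑d)^[p] b + b * (⇑d)^[p] a :=
  d.iterate_prime_apply_mul hp
end

section
/- Let p be a prime and a, c, j_0 positive integers with p ∤ (a+1) and a + 1 ≤ j_0 and a + 1 ≡ j_0 (mod p). Suppose Θ is a set of positive integers not divisible by p, with minimum j_0, containing all integers d ≥ c not divisible by p, and closed under the operation j ↦ j − (a+1) whenever j − (a+1) > 0 and p ∤ (j − (a+1)). Then c ≥ (p−1)a. -/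
/-! If `c < (p - 1) a`, then `p a - (a + 1) ≥ c` lies in `Θ`. The numbers `p a - k (a + 1)` with
`0 < k < p` are not divisible by `p`, so closure lets us subtract `a + 1` from it `p - 2` times, landing
on `p a - (p - 1)(a + 1)`, which must still be at least `a + 1 ≤ j₀`; but that says
`p (a + 1) ≤ p a`. -/

theorem Nat.Prime.not_dvd_mul_sub_mul {p a b k : ℕ} (hp : p.Prime) (hb : ¬ p ∣ b)
    (hk : 0 < k) (hkp : k < p) (hle : k * b ≤ p * a) : ¬ p ∣ p * a - k * b := by
  intro h
  have hkb : p ∣ k * b := by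
    simpa [Nat.sub_sub_self hle] using Nat.dvd_sub (dvd_mul_right p a) h
  exact (hp.dvd_mul.mp hkb).elim (Nat.not_dvd_of_pos_of_lt hk hkp) hb

/-- `hlow` keeps the subtractions `n - k * b` from truncating. -/
theorem sub_mul_mem_of_sub_mem {p b n : ℕ} {S : Set ℕ} (hlow : ∀ j ∈ S, b ≤ j)
    (hclosed : ∀ j ∈ S, 0 < j - b → ¬ p ∣ (j - b) → j - b ∈ S) (hn : n ∈ S) :
    ∀ m, (∀ k ≤ m, k * b ≤ n → ¬ p ∣ n - k * b) → n - m * b ∈ S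
  | 0, _ => by simpa using hn
  | m + 1, hdvd => by
    have hm : n - m * b ∈ S := sub_mul_mem_of_sub_mem hlow hclosed hn m
      fun k hk => hdvd k (by omega)
    have hb : b ≤ n - m * b := hlow _ hm
    have hle : (m + 1) * b ≤ n := by
      rcases b.eq_zero_or_pos with rfl | hb0
      · simp
      · rw [add_one_mul]; omega
    have hsub : n - (m + 1) * b = n - m * b - b := by rw [add_one_mul, Nat.sub_sub]
    have hnd : ¬ p ∣ n - (m + 1) * b := hdvd (m + 1) le_rfl hle
    rw [hsub] at hnd ⊢
    exact hclosed _ hm (Nat.pos_of_ne_zero fun h => hnd (h ▸ dvd_zero p)) hnd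

theorem conductor_combinatorial_bound_general
    (p a c j₀ : ℕ) (hp : p.Prime)
    (hpa : ¬ p ∣ (a + 1)) (hle : a + 1 ≤ j₀)
    (Θ : Set ℕ)
    (hmin : ∀ j ∈ Θ, j₀ ≤ j)
    (hbig : ∀ d : ℕ, c ≤ d → ¬ p ∣ d → d ∈ Θ)
    (hclosed : ∀ j ∈ Θ, 0 < j - (a + 1) → ¬ p ∣ (j - (a + 1)) → j - (a + 1) ∈ Θ) :
    (p - 1) * a ≤ c := by
  by_contra! hc
  obtain ⟨q, rfl⟩ : ∃ q, p = q + 2 := ⟨p - 2, by have := hp.two_le; omega⟩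
  have hpa_expand : (q + 2) * a = q * a + 2 * a := by ring
  have hc' : c < q * a + a := by rwa [show (q + 2 - 1) * a = q * a + a by simp; ring] at hc
  have hlow : ∀ j ∈ Θ, a + 1 ≤ j := fun j hj => hle.trans (hmin j hj)
  have hnd : ∀ k ≤ q, k * (a + 1) ≤ (q + 2) * a - (a + 1) →
      ¬ q + 2 ∣ (q + 2) * a - (a + 1) - k * (a + 1) := by
    intro k hk hkb
    rw [Nat.sub_sub, show a + 1 + k * (a + 1) = (k + 1) * (a + 1) by ring]
    exact hp.not_dvd_mul_sub_mul hpa k.succ_pos (by omega) (by rw [add_one_mul]; omega)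
  have hstart : (q + 2) * a - (a + 1) ∈ Θ :=
    hbig _ (by omega) (by simpa using hnd 0 q.zero_le)
  have hend := hlow _ (sub_mul_mem_of_sub_mem hlow hclosed hstart q hnd)
  have hqa : q * (a + 1) = q * a + q := by ring
  omega

/-- Combinatorial core of the conductor bound.  Let `p` be a prime and
`a, c, j₀` positive integers with `p ∤ a + 1`, `a + 1 ≤ j₀` and `a + 1 ≡ j₀ (mod p)`.
Suppose `Θ` is a set of positive integers not divisible by `p`, with minimum `j₀`,
containing every `d ≥ c` not divisible by `p`, and closed under `j ↦ j − (a+1)` whenever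
the result is positive and not divisible by `p`.  Then `c ≥ (p − 1) · a`. -/
theorem conductor_combinatorial_bound
    (p a c j₀ : ℕ) (hp : p.Prime) (ha : 0 < a) (hc : 0 < c) (hj₀ : 0 < j₀)
    (hpa : ¬ p ∣ (a + 1)) (hle : a + 1 ≤ j₀) (hmod : a + 1 ≡ j₀ [MOD p])
    (Θ : Set ℕ)
    (hΘ : ∀ j ∈ Θ, 0 < j ∧ ¬ p ∣ j)
    (hmem : j₀ ∈ Θ) (hmin : ∀ j ∈ Θ, j₀ ≤ j)
    (hbig : ∀ d : ℕ, c ≤ d → ¬ p ∣ d → d ∈ Θ)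
    (hclosed : ∀ j ∈ Θ, 0 < j - (a + 1) → ¬ p ∣ (j - (a + 1)) → j - (a + 1) ∈ Θ) :
    (p - 1) * a ≤ c :=
  conductor_combinatorial_bound_general p a c j₀ hp hpa hle Θ hmin hbig hclosed
end

section
/- Let A be an excellent integral domain, K → A a ring homomorphism from a field, and K ⊆ K_1 ⊆ K_2 finite field extensions such that A ⊗_K K_1 and A ⊗_K K_2 are integral domains. Let B and C be the normalizations of A ⊗_K K_1 and A ⊗_K K_2 respectively. Then, as ideals of C, the conductor of A ⊗_K K_2 in C contains the product of the conductor of B ⊗_{K_1} K_2 in C with the conductor of A ⊗_K K_1 in B: 𝒞(C/A) ⊇ 𝒞(C/B) · 𝒞(B/A). -/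
theorem Subring.mul_mem_of_mem_span {L : Type*} [CommRing L] (S : Subring L) {s : Set L}
    {x z : L} (hs : ∀ b ∈ s, x * b ∈ S) (hz : z ∈ Submodule.span S s) : x * z ∈ S := by
  -- `(1 : Submodule S L)` is `S` itself, viewed as an `S`-submodule of `L`.
  have hle : Submodule.span S s ≤ (1 : Submodule S L).comap (LinearMap.mulLeft S x) :=
    Submodule.span_le.2 fun b hb => Submodule.mem_one.2 ⟨⟨_, hs b hb⟩, rfl⟩
  obtain ⟨w, hw⟩ := Submodule.mem_one.1 (hle hz)
  rw [LinearMap.mulLeft_apply] at hw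
  exact hw ▸ w.2

/-- All rings are subrings of one field `L` (the fraction field of `A ⊗_K K₂`), with
`A₁ = A ⊗_K K₁`, `A₂ = A ⊗_K K₂` and `B₂ = B ⊗_{K₁} K₂`; `hspan` encodes that the elements of
`B ⊗_{K₁} K₂` are sums `Σ bᵢ ⊗ λᵢ` with `bᵢ ∈ B` and `λᵢ ∈ K₂ ⊆ A₂`. -/
theorem conductor_multiplicative_general
    (L : Type*) [Field L]
    (A₁ A₂ B B₂ C : Subring L)
    (h₁₂ : A₁ ≤ A₂)
    (hspan : (B₂ : Set L) ⊆
      (Submodule.span A₂ (B : Set L) : Submodule A₂ L)) :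
    ∀ x ∈ {x : L | ∀ b ∈ B, x * b ∈ A₁},
      ∀ y ∈ {y : L | ∀ c ∈ C, y * c ∈ B₂},
        ∀ c ∈ C, x * y * c ∈ A₂ := by
  intro x hx y hy c hc
  rw [mul_assoc]
  exact A₂.mul_mem_of_mem_span (fun b hb => h₁₂ (hx b hb)) (hspan (hy c hc))

/-- Multiplicativity of conductors under composed base changes.
All rings in the diagram of the paper are realized as subrings of one field `L`
(the fraction field of `A ⊗_K K₂`): `A₁ = A ⊗_K K₁`, `A₂ = A ⊗_K K₂`, `B` the
normalization (integral closure) of `A₁`, `B₂ = B ⊗_{K₁} K₂`, and `C` the normalization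
of `A₂`.  The hypothesis `hspan` records that `B₂` is generated as an `A₂`-module by
`B` (elements of `B ⊗_{K₁} K₂` are sums `Σ bᵢ ⊗ λᵢ` with `bᵢ ∈ B`, `λᵢ ∈ K₂ ⊆ A₂`).
The conductors are `𝒞(B/A) = {x : x·B ⊆ A₁}`, `𝒞(C/B) = {x : x·C ⊆ B₂}` and
`𝒞(C/A) = {x : x·C ⊆ A₂}`; the conclusion is `𝒞(C/B)·𝒞(B/A) ⊆ 𝒞(C/A)`. -/
theorem conductor_multiplicative
    (L : Type*) [Field L]
    (A₁ A₂ B B₂ C : Subring L)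
    (h₁₂ : A₁ ≤ A₂) (h₁B : A₁ ≤ B) (hBB₂ : B ≤ B₂) (hA₂B₂ : A₂ ≤ B₂) (hB₂C : B₂ ≤ C)
    (hBint : ∀ x ∈ B, IsIntegral A₁ x) (hBcl : ∀ x : L, IsIntegral A₁ x → x ∈ B)
    (hCint : ∀ x ∈ C, IsIntegral A₂ x) (hCcl : ∀ x : L, IsIntegral A₂ x → x ∈ C)
    (hspan : (B₂ : Set L) ⊆
      (Submodule.span A₂ (B : Set L) : Submodule A₂ L)) :
    ∀ x ∈ {x : L | ∀ b ∈ B, x * b ∈ A₁},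
      ∀ y ∈ {y : L | ∀ c ∈ C, y * c ∈ B₂},
        ∀ c ∈ C, x * y * c ∈ A₂ :=
  conductor_multiplicative_general L A₁ A₂ B B₂ C h₁₂ hspan
end

section
/- Let H_d be the Hirzebruch surface of degree d ≥ 1 with exceptional section D (D² = −d) and fiber F (F² = 0, D·F = 1), with K_{H_d} = −2D − (d+2)F. Suppose p is a prime and a, b, a' are nonnegative integers with (a,b) ≠ (0,0) satisfying the inequalities 2 − (p−1)a − a' > 0 and d + 2 − (p−1)b ≥ d(2 − (p−1)a − a'). Then (p, a, b, a') belongs to the explicit finite list: {(2,1,0,0), (2,1,1,0), (2,1,2,0)} for any d; {(2,0,2,1), (3,0,1,1)} (with equality in the second inequality); and no solutions exist with a = a' = 0 except (p,a,b,a',d) = (2,0,1,0,1) which gives equality and d = 1. -/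
/-!
Write `q = p - 1 ≥ 1`. The first inequality says that `-(K + (p-1)C + Δ)` meets a fibre in
`2 - qa - a' > 0`, so `qa + a' ≤ 1`: either `q = a = 1, a' = 0`, or `a = 0` and `a' ≤ 1`.
The second inequality then bounds `qb`: by `2` when `a = 1`, by `2 - d ≤ 1` when `a = a' = 0`,
and when `a' = 1` it is an equality forcing `qb = 2`.
-/

theorem Nat.eq_cases_of_mul_add_lt_two {q a a' : ℕ} (hq : 0 < q) (h : q * a + a' < 2) :
    (q = 1 ∧ a = 1 ∧ a' = 0) ∨ (a = 0 ∧ a' = 0) ∨ (a = 0 ∧ a' = 1) := by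
  rcases Nat.eq_zero_or_pos a with rfl | ha
  · omega
  · have : q ≤ q * a := Nat.le_mul_of_pos_right q ha
    have : a ≤ q * a := Nat.le_mul_of_pos_left a hq
    omega

theorem Nat.eq_one_two_or_two_one_of_mul_eq_two {q b : ℕ} (h : q * b = 2) :
    (q = 1 ∧ b = 2) ∨ (q = 2 ∧ b = 1) := by
  rcases Nat.prime_two.eq_one_or_self_of_dvd q ⟨b, h.symm⟩ with rfl | rfl <;> omega

/-- Numerical classification on the Hirzebruch surface `H_d` (`d ≥ 1`,
`D² = −d`, `F² = 0`, `D·F = 1`, `K = −2D−(d+2)F`).  Suppose `p` is prime and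
`a, b, a'` are nonnegative integers with `(a, b) ≠ (0, 0)` such that
`2 − (p−1)a − a' > 0` and `d + 2 − (p−1)b ≥ d(2 − (p−1)a − a')`, where equality in the
second inequality is forced whenever `a' > 0` (since then the exceptional section `D` is
contracted and `Y = S_d`).  Then `(p, a, b, a')` is one of
`(2,1,0,0), (2,1,1,0), (2,1,2,0)` (any `d`), or `(2,0,2,1), (3,0,1,1)` (equality), or
`(p,a,b,a',d) = (2,0,1,0,1)` (which gives equality and `d = 1`). -/
theorem hirzebruch_numerical_classification
    (p a b a' d : ℕ) (hp : p.Prime) (hd : 1 ≤ d) (hab : ¬(a = 0 ∧ b = 0))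
    (h1 : 0 < (2 : ℤ) - ((p : ℤ) - 1) * a - a')
    (h2 : (d : ℤ) + 2 - ((p : ℤ) - 1) * b ≥ d * (2 - ((p : ℤ) - 1) * a - a'))
    (h3 : 0 < a' → (d : ℤ) + 2 - ((p : ℤ) - 1) * b = d * (2 - ((p : ℤ) - 1) * a - a')) :
    (p, a, b, a') = (2, 1, 0, 0) ∨ (p, a, b, a') = (2, 1, 1, 0) ∨
    (p, a, b, a') = (2, 1, 2, 0) ∨ (p, a, b, a') = (2, 0, 2, 1) ∨
    (p, a, b, a') = (3, 0, 1, 1) ∨ (p, a, b, a', d) = (2, 0, 1, 0, 1) := by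
  obtain ⟨q, rfl⟩ : ∃ q, p = q + 1 := ⟨p - 1, by have := hp.two_le; omega⟩
  have hq : 0 < q := by have := hp.two_le; omega
  push_cast at h1 h2 h3
  simp only [add_sub_cancel_right] at h1 h2 h3
  rcases Nat.eq_cases_of_mul_add_lt_two hq (show q * a + a' < 2 by zify; linarith) with
    ⟨rfl, rfl, rfl⟩ | ⟨rfl, rfl⟩ | ⟨rfl, rfl⟩
  · have : b ≤ 2 := by push_cast at h2; omega
    interval_cases b <;> simp
  · have hb : 0 < b := by omega
    have : q * b + d ≤ 2 := by zify; push_cast at h2; linarith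
    have hqb : q * b = 1 := le_antisymm (by omega) (Nat.mul_pos hq hb)
    obtain ⟨rfl, rfl⟩ := mul_eq_one.1 hqb
    obtain rfl : d = 1 := by omega
    simp
  · have heq := h3 one_pos
    push_cast at heq
    have hqb : q * b = 2 := by zify; linarith
    rcases Nat.eq_one_two_or_two_one_of_mul_eq_two hqb with ⟨rfl, rfl⟩ | ⟨rfl, rfl⟩ <;> simp
end

section
/- Let B be a commutative ring of characteristic p, A ⊆ B a subring, and C = {f ∈ B : ∂(f) = 0 for all ∂ ∈ F}, where F is a set of A-linear derivations of B. If B is an integrally closed domain, then C is integrally closed in its fraction field intersected with Frac(B); more precisely, if c ∈ Frac(B) is integral over C and is annihilated by the natural extensions of all ∂ ∈ F to Frac(B), then c ∈ C. -/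
/-- Normality of the ring of constants of a family of derivations.
Let `B` be an integrally closed domain, `A ⊆ B` a subring, `F` a set of `A`-linear
derivations of `B`, and `C = {f ∈ B : D f = 0 for all D ∈ F}` the ring of constants.
If `c ∈ Frac(B)` is integral over `C` and is annihilated by the (unique quotient-rule)
extension of every `D ∈ F` to `Frac(B)` — i.e. whenever `c = x / y` with `y ≠ 0` one has
`y·Dx = x·Dy` — then `c` lies in (the image of) `C`. -/
theorem constants_integrally_closed
    (B : Type*) [CommRing B] [IsDomain B] [IsIntegrallyClosed B]
    (A : Subring B) (F : Set (Derivation A B B))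
    (c : FractionRing B)
    (hint : RingHom.IsIntegralElem
      ((algebraMap B (FractionRing B)).comp
        (Subring.subtype
          { carrier := {f : B | ∀ D ∈ F, D f = 0}
            mul_mem' := fun {x y} hx hy D hD => by
              simp only [Set.mem_setOf_eq] at hx hy
              rw [Derivation.leibniz, hx D hD, hy D hD, smul_zero, smul_zero, add_zero]
            one_mem' := fun D _ => D.map_one_eq_zero
            add_mem' := fun {x y} hx hy D hD => by
              simp only [Set.mem_setOf_eq] at hx hy
              rw [map_add, hx D hD, hy D hD, add_zero]
            zero_mem' := fun D _ => D.map_zero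
            neg_mem' := fun {x} hx D hD => by
              simp only [Set.mem_setOf_eq] at hx
              rw [map_neg, hx D hD, neg_zero] })) c)
    (hann : ∀ D ∈ F, ∀ x y : B, y ≠ 0 →
      c * algebraMap B (FractionRing B) y = algebraMap B (FractionRing B) x →
      y * D x = x * D y) :
    ∃ b : B, (∀ D ∈ F, D b = 0) ∧ algebraMap B (FractionRing B) b = c := by
  obtain ⟨b, hb⟩ := IsIntegrallyClosed.isIntegral_iff.mp hint.of_comp
  refine ⟨b, fun D hD => ?_, hb⟩
  simpa using hann D hD b 1 one_ne_zero (by rw [map_one, mul_one, hb])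
end
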